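/- Let (A,B) be a monoidal resolvent pair (U : A → B monoidal, exact, faithful, with left adjoint F), where A is a tensor category (rigid monoidal with exact tensor product). Then the relatively projective objects of A form a tensor ideal: if P is relatively projective and V is any object, then V ⊗ P and P ⊗ V are relatively projective; moreover the duals P^∨ and ^∨P of a relatively projective object are relatively projective. -/

import Mathlib

open CategoryTheory CategoryTheory.Limits

universe v u v' u'

/-- A resolvent pair of abelian categories: an adjunction `F ⊣ U` where the right adjoint
`U : A ⥤ B` is additive, exact and faithful. -/
structure ResolventPair (A : Type u) [Category.{v} A] [Abelian A]
    (B : Type u') [Category.{v'} B] [Abelian B] where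
  /-- the left adjoint (e.g. induction) -/
  F : B ⥤ A
  /-- the right adjoint (e.g. restriction), assumed additive, exact and faithful -/
  U : A ⥤ B
  adj : F ⊣ U
  additive : U.Additive
  preservesFiniteLimits : PreservesFiniteLimits U
  preservesFiniteColimits : PreservesFiniteColimits U
  faithful : U.Faithful

namespace ResolventPair

variable {A : Type u} [Category.{v} A] [Abelian A]
  {B : Type u'} [Category.{v'} B] [Abelian B]

/-- A morphism `f` of `A` is allowable if `U f` admits a quasi-inverse `s`,
i.e. `U f ∘ s ∘ U f = U f`. -/
def Allowable (R : ResolventPair A B) {V W : A} (f : V ⟶ W) : Prop :=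
  ∃ s : R.U.obj W ⟶ R.U.obj V, R.U.map f ≫ s ≫ R.U.map f = R.U.map f

/-- An object `P` of `A` is relatively projective if every lifting problem against an
allowable epimorphism can be solved. -/
def RelProjective (R : ResolventPair A B) (P : A) : Prop :=
  ∀ ⦃V W : A⦄ (f : V ⟶ W), Epi f → R.Allowable f →
    ∀ g : P ⟶ W, ∃ h : P ⟶ V, h ≫ f = g

end ResolventPair

open MonoidalCategory

variable {A : Type u} [Category.{v} A] [Abelian A] {B : Type u'} [Category.{v'} B] [Abelian B]

/-!
Tensoring with `V` is left adjoint to tensoring with its dual, an exact functor which, `U` being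
monoidal, preserves allowable morphisms; transposing lifting problems along this adjunction shows
that `V ⊗ P` and `P ⊗ V` are relatively projective. The zigzag identities then exhibit each dual
of `P` as a retract of a tensor product involving `P`.
-/

namespace ResolventPair

variable {R : ResolventPair A B}

lemma RelProjective.of_retract {P Q : A} (hQ : R.RelProjective Q) (e : Retract P Q) :
    R.RelProjective P := by
  intro V W f hf ha g
  obtain ⟨h, hh⟩ := hQ f hf ha (e.r ≫ g)
  exact ⟨e.i ≫ h, by rw [Category.assoc, hh, e.retract_assoc]⟩

lemma RelProjective.obj_of_adjunction {L G : A ⥤ A} (adj : L ⊣ G) [G.PreservesEpimorphisms]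
    (hG : ∀ ⦃V W : A⦄ (f : V ⟶ W), R.Allowable f → R.Allowable (G.map f))
    {P : A} (hP : R.RelProjective P) : R.RelProjective (L.obj P) := by
  intro V W f hf ha g
  obtain ⟨h, hh⟩ := hP (G.map f) inferInstance (hG f ha) (adj.homEquiv _ _ g)
  exact ⟨(adj.homEquiv _ _).symm h, by
    rw [← adj.homEquiv_naturality_right_symm, hh, Equiv.symm_apply_apply]⟩

section Monoidal

variable [MonoidalCategory A] [MonoidalCategory B] [R.U.Monoidal]

lemma Allowable.whiskerLeft {V W : A} {f : V ⟶ W} (ha : R.Allowable f) (Y : A) :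
    R.Allowable (Y ◁ f) := by
  obtain ⟨s, hs⟩ := ha
  refine ⟨Functor.OplaxMonoidal.δ R.U Y W ≫ (R.U.obj Y ◁ s) ≫ Functor.LaxMonoidal.μ R.U Y V, ?_⟩
  simp only [Functor.Monoidal.map_whiskerLeft, Category.assoc, Functor.Monoidal.μ_δ_assoc]
  rw [← whiskerLeft_comp_assoc, ← whiskerLeft_comp_assoc, Category.assoc, hs]

lemma Allowable.whiskerRight {V W : A} {f : V ⟶ W} (ha : R.Allowable f) (Y : A) :
    R.Allowable (f ▷ Y) := by
  obtain ⟨s, hs⟩ := ha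
  refine ⟨Functor.OplaxMonoidal.δ R.U W Y ≫ (s ▷ R.U.obj Y) ≫ Functor.LaxMonoidal.μ R.U V Y, ?_⟩
  simp only [Functor.Monoidal.map_whiskerRight, Category.assoc, Functor.Monoidal.μ_δ_assoc]
  rw [← comp_whiskerRight_assoc, ← comp_whiskerRight_assoc, Category.assoc, hs]

lemma RelProjective.whiskerLeft {P : A} (hP : R.RelProjective P) (V : A)
    [HasLeftDual V] [HasLeftDual (ᘁV)] :
    R.RelProjective (V ⊗ P) :=
  have := (tensorLeftAdjunction (ᘁ(ᘁV)) (ᘁV)).isLeftAdjoint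
  hP.obj_of_adjunction (tensorLeftAdjunction (ᘁV) V) fun _ _ _ ha => ha.whiskerLeft _

lemma RelProjective.whiskerRight {P : A} (hP : R.RelProjective P) (V : A)
    [HasRightDual V] [HasRightDual (Vᘁ)] :
    R.RelProjective (P ⊗ V) :=
  have := (tensorRightAdjunction (Vᘁ) ((Vᘁ)ᘁ)).isLeftAdjoint
  hP.obj_of_adjunction (tensorRightAdjunction V (Vᘁ)) fun _ _ _ ha => ha.whiskerRight _

end Monoidal

end ResolventPair

namespace CategoryTheory.ExactPairing

variable {C : Type u} [Category.{v} C] [MonoidalCategory C]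

/-- The zigzag identity `(ε ▷ Y) ∘ (Y ◁ η) = 𝟙` exhibits `Y` as a retract of `Y ⊗ X ⊗ Y`. -/
def retractRight (X Y : C) [ExactPairing X Y] : Retract Y (Y ⊗ X ⊗ Y) where
  i := (ρ_ Y).inv ≫ Y ◁ η_ X Y
  r := (α_ _ _ _).inv ≫ ε_ X Y ▷ Y ≫ (λ_ Y).hom

def retractLeft (X Y : C) [ExactPairing X Y] : Retract X (X ⊗ Y ⊗ X) where
  i := (λ_ X).inv ≫ η_ X Y ▷ X ≫ (α_ _ _ _).hom
  r := X ◁ ε_ X Y ≫ (ρ_ X).hom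

end CategoryTheory.ExactPairing

/-- In a monoidal resolvent pair whose top category `A` is a tensor category (rigid monoidal
abelian), the relatively projective objects form a tensor ideal which is stable under the
duality functors: if `P` is relatively projective then so are `V ⊗ P` and `P ⊗ V` for every
object `V`, as well as the right dual `Pᘁ` and the left dual `ᘁP`. -/
theorem relProjective_tensor_ideal [MonoidalCategory A] [MonoidalCategory B]
    [RigidCategory A] (R : ResolventPair A B) [R.U.Monoidal]
    (P : A) (hP : R.RelProjective P) :
    (∀ V : A, R.RelProjective (V ⊗ P) ∧ R.RelProjective (P ⊗ V)) ∧
      R.RelProjective (Pᘁ) ∧ R.RelProjective (ᘁP) :=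
  ⟨fun V => ⟨hP.whiskerLeft V, hP.whiskerRight V⟩,
    ((hP.whiskerRight (Pᘁ)).whiskerLeft (Pᘁ)).of_retract (ExactPairing.retractRight P (Pᘁ)),
    ((hP.whiskerRight (ᘁP : A)).whiskerLeft (ᘁP : A)).of_retract
      (ExactPairing.retractLeft (ᘁP) P)⟩
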